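/- arXiv:dg-ga/9706001 — 6 statements merged into one kernel-verified Lean document; each statement's English description precedes it below -/
import Mathlib

section
/- Let P be a Poisson algebra over ℝ with identity, and let L be a finite-codimensional Lie ideal of P (a linear subspace with {P,L} ⊆ L such that the quotient vector space P/L is finite-dimensional). Then either L contains the derived ideal {P,P} (the linear span of all brackets {f,g} with f,g ∈ P), or there exists a maximal associative ideal J of P which is finite-codimensional as a linear subspace and contains {P,P}. -/
/-!
If some bracket escapes `L`, the elements `f` with `{f, P} ⊆ L` form a proper subalgebra `C` of
finite codimension, stable under all Hamiltonians by Jacobi. Its conductor `{a | a P ⊆ C}`, the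
largest ideal of `P` inside `C`, is then a proper Poisson ideal of finite codimension, and so is
its radical `R`: in characteristic zero a derivation `D` preserving an ideal `I` preserves its
radical, since `u ^ n ∈ I` forces `(D u) ^ (2 n) ∈ I`.

Let `J ⊇ R` be maximal. For `x ∈ P`, the minimal polynomial `r` of `x` in the reduced
finite-dimensional algebra `P ⧸ R` is squarefree, hence separable. As `r(x) ∈ R`, the chain rule
gives `r'(x) {y, x} = {y, r(x)} ∈ R ⊆ J`, while `r'(x) ∉ J` because `r` and `r'` are coprime and
`r(x) ∈ J`. Hence `{y, x} ∈ J`.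
-/

theorem Ideal.mem_of_nsmul_mem (K : Type*) {A : Type*} [Field K] [CharZero K] [CommRing A]
    [Algebra K A] {I : Ideal A} {n : ℕ} (hn : n ≠ 0) {x : A} (h : n • x ∈ I) : x ∈ I := by
  have := I.smul_of_tower_mem (n : K)⁻¹ h
  rwa [← Nat.cast_smul_eq_nsmul K, smul_smul, inv_mul_cancel₀ (Nat.cast_ne_zero.mpr hn),
    one_smul] at this

namespace Derivation

variable {K A : Type*} [CommRing A]

theorem mul_map_pow [CommRing K] [Algebra K A] (D : Derivation K A A) (v : A) (k : ℕ) :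
    v * D (v ^ k) = k • (v ^ k * D v) := by
  cases k with
  | zero => simp
  | succ k => rw [leibniz_pow, Nat.add_sub_cancel, smul_eq_mul, nsmul_eq_mul, nsmul_eq_mul]; ring

variable [Field K] [CharZero K] [Algebra K A] (D : Derivation K A A) {I : Ideal A}

theorem pow_mul_map_pow_add_two_mem (hI : ∀ a ∈ I, D a ∈ I) {u : A} {B k : ℕ}
    (h : u ^ (B + 1) * D u ^ k ∈ I) : u ^ B * D u ^ (k + 2) ∈ I := by
  refine Ideal.mem_of_nsmul_mem K (Nat.succ_ne_zero B) ?_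
  have key : (B + 1) • (u ^ B * D u ^ (k + 2)) =
      D u * D (u ^ (B + 1) * D u ^ k) - k • (u ^ (B + 1) * D u ^ k * D (D u)) := by
    rw [leibniz, smul_eq_mul, smul_eq_mul, mul_add, mul_left_comm (D u) (u ^ (B + 1)),
      mul_map_pow, leibniz_pow D u (B + 1)]
    simp only [nsmul_eq_mul, smul_eq_mul, Nat.add_sub_cancel]
    push_cast
    ring
  rw [key]
  exact I.sub_mem (I.mul_mem_left _ (hI _ h)) (nsmul_mem (I.mul_mem_right _ h) k)

theorem map_mem_radical (hI : ∀ a ∈ I, D a ∈ I) {u : A} (hu : u ∈ I.radical) :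
    D u ∈ I.radical := by
  obtain ⟨n, hn⟩ := hu
  have descent : ∀ i ≤ n, u ^ (n - i) * D u ^ (2 * i) ∈ I := by
    intro i
    induction i with
    | zero => simpa using hn
    | succ i ih =>
      intro hi
      have := pow_mul_map_pow_add_two_mem D hI (B := n - (i + 1)) (k := 2 * i)
        (by rw [show n - (i + 1) + 1 = n - i by omega]; exact ih (by omega))
      rwa [show 2 * i + 2 = 2 * (i + 1) by ring] at this
  exact ⟨2 * n, by simpa using descent n le_rfl⟩

end Derivation

namespace Subalgebra

variable {K A : Type*} [CommRing K] [CommRing A] [Algebra K A] (C : Subalgebra K A)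

def conductor : Ideal A where
  carrier := {a | ∀ b, a * b ∈ C}
  zero_mem' b := by simp only [zero_mul, zero_mem]
  add_mem' ha hb c := by simpa only [add_mul] using C.add_mem (ha c) (hb c)
  smul_mem' c a ha b := by simpa only [smul_eq_mul, mul_left_comm, mul_assoc] using ha (c * b)

variable {C}

theorem mem_conductor {a : A} : a ∈ C.conductor ↔ ∀ b, a * b ∈ C := Iff.rfl

theorem conductor_ne_top {x : A} (hx : x ∉ C) : C.conductor ≠ ⊤ := fun h =>
  hx (one_mul x ▸ mem_conductor.mp ((Ideal.eq_top_iff_one _).mp h) x)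

theorem conductor_cofg [IsNoetherianRing K] (hC : (toSubmodule C).CoFG) :
    (C.conductor.restrictScalars K).CoFG := by
  obtain ⟨n, s, hs⟩ := Module.Finite.exists_fin (R := K) (M := A ⧸ toSubmodule C)
  choose t ht using fun i => Submodule.mkQ_surjective (toSubmodule C) (s i)
  let Ψ : A →ₗ[K] (A ⧸ toSubmodule C) × (Fin n → A ⧸ toSubmodule C) :=
    (toSubmodule C).mkQ.prod
      (LinearMap.pi fun i => (toSubmodule C).mkQ ∘ₗ LinearMap.mulRight K (t i))
  refine (Submodule.CoFG.ker Ψ).of_le fun a ha b => ?_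
  have ha' : a ∈ C ∧ ∀ i, a * t i ∈ C := by simpa [Ψ, funext_iff] using ha
  have hb : Submodule.Quotient.mk b ∈ Submodule.span K (Set.range s) := hs ▸ Submodule.mem_top
  obtain ⟨c, hc⟩ := (Submodule.mem_span_range_iff_exists_fun K).mp hb
  have hrest : b - ∑ i, c i • t i ∈ toSubmodule C := by
    rw [← Submodule.ker_mkQ (toSubmodule C), LinearMap.mem_ker, map_sub, map_sum]
    simp only [map_smul, ht, hc, Submodule.mkQ_apply, sub_self]
  have hsplit : a * b = a * (b - ∑ i, c i • t i) + ∑ i, c i • (a * t i) := by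
    simp [mul_sub, Finset.mul_sum]
  rw [hsplit]
  exact C.add_mem (C.mul_mem ha'.1 hrest) (C.sum_mem fun i _ => C.smul_mem (ha'.2 i) _)

end Subalgebra

namespace PoissonBracket

open Polynomial

variable {K P : Type*} [Field K] [CommRing P] [Algebra K P] {br : P →ₗ[K] P →ₗ[K] P}

variable (br) in
def hamiltonian (leibniz : ∀ f g h : P, br f (g * h) = br f g * h + g * br f h) (f : P) :
    Derivation K P P :=
  Derivation.mk' (br f) fun g h => by rw [leibniz, smul_eq_mul, smul_eq_mul]; ring

theorem bracket_aeval (leibniz : ∀ f g h : P, br f (g * h) = br f g * h + g * br f h)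
    (y x : P) (r : K[X]) : br y (aeval x r) = aeval x (derivative r) * br y x :=
  (hamiltonian br leibniz y).map_aeval r x

variable (br) in
def centralizerModulo (L : Submodule K P) : Submodule K P := ⨅ p, L.comap (br.flip p)

variable {L : Submodule K P}

theorem mem_centralizerModulo {f : P} : f ∈ centralizerModulo br L ↔ ∀ p, br f p ∈ L := by
  simp [centralizerModulo]

theorem one_mem_centralizerModulo (anti : ∀ f g : P, br f g = - br g f)
    (leibniz : ∀ f g h : P, br f (g * h) = br f g * h + g * br f h) :
    (1 : P) ∈ centralizerModulo br L :=
  mem_centralizerModulo.mpr fun p => by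
    rw [anti, show br p 1 = 0 from (hamiltonian br leibniz p).map_one_eq_zero, neg_zero]
    exact L.zero_mem

theorem mul_mem_centralizerModulo (anti : ∀ f g : P, br f g = - br g f)
    (leibniz : ∀ f g h : P, br f (g * h) = br f g * h + g * br f h) {c c' : P}
    (hc : c ∈ centralizerModulo br L) (hc' : c' ∈ centralizerModulo br L) :
    c * c' ∈ centralizerModulo br L := by
  rw [mem_centralizerModulo] at *
  intro b
  have key : br (c * c') b = br c' (b * c) + br c (b * c') := by
    rw [anti, leibniz, leibniz, leibniz, anti c' b, anti c b, anti c' c]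
    ring
  rw [key]
  exact L.add_mem (hc' _) (hc _)

theorem bracket_mem_centralizerModulo
    (jacobi : ∀ f g h : P, br f (br g h) = br (br f g) h + br g (br f h))
    (hL : ∀ f, ∀ l ∈ L, br f l ∈ L) (f : P) {c : P} (hc : c ∈ centralizerModulo br L) :
    br f c ∈ centralizerModulo br L := by
  rw [mem_centralizerModulo] at *
  intro w
  rw [show br (br f c) w = br f (br c w) - br c (br f w) by rw [jacobi]; ring]
  exact L.sub_mem (hL f _ (hc w)) (hc _)

theorem centralizerModulo_cofg (hL : ∀ f, ∀ l ∈ L, br f l ∈ L) (hfc : L.CoFG) :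
    (centralizerModulo br L).CoFG := by
  let Φ : P →ₗ[K] Module.End K (P ⧸ L) :=
    L.mapQLinear L ∘ₗ br.codRestrict (L.compatibleMaps L) fun f l hl => hL f l hl
  convert Submodule.CoFG.ker Φ
  ext f
  rw [mem_centralizerModulo, LinearMap.mem_ker, LinearMap.ext_iff, Submodule.Quotient.forall]
  exact forall_congr' fun p => (Submodule.Quotient.mk_eq_zero L).symm

theorem conductor_bracket_mem
    (leibniz : ∀ f g h : P, br f (g * h) = br f g * h + g * br f h) {C : Subalgebra K P}
    (hC : ∀ f, ∀ c ∈ C, br f c ∈ C) (f : P) {a : P} (ha : a ∈ C.conductor) :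
    br f a ∈ C.conductor := fun q => by
  rw [show br f a * q = br f (a * q) - a * br f q by rw [leibniz]; ring]
  exact C.sub_mem (hC f _ (ha q)) (ha _)

theorem radical_bracket_mem [CharZero K]
    (leibniz : ∀ f g h : P, br f (g * h) = br f g * h + g * br f h) {I : Ideal P}
    (hI : ∀ f, ∀ a ∈ I, br f a ∈ I) (f : P) {a : P} (ha : a ∈ I.radical) : br f a ∈ I.radical :=
  (hamiltonian br leibniz f).map_mem_radical (hI f) ha

theorem bracket_mem_of_radical_le_prime [CharZero K]
    (leibniz : ∀ f g h : P, br f (g * h) = br f g * h + g * br f h) {R J : Ideal P}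
    (hR : ∀ f, ∀ a ∈ R, br f a ∈ R) (hrad : R.IsRadical) (hfin : (R.restrictScalars K).CoFG)
    (hJ : J.IsPrime) (hRJ : R ≤ J) (y x : P) : br y x ∈ J := by
  have : Module.Finite K (P ⧸ R) :=
    Module.Finite.equiv (Submodule.Quotient.restrictScalarsEquiv K R)
  have : IsReduced (P ⧸ R) := (Ideal.isRadical_iff_quotient_reduced R).mp hrad
  set r := minpoly K (Ideal.Quotient.mk R x)
  have hsep : r.Separable := PerfectField.separable_iff_squarefree.mpr
    ((minpoly.isRadical K _).squarefree (minpoly.ne_zero (IsIntegral.of_finite K _)))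
  have hroot : aeval x r ∈ R := by
    rw [← Ideal.Quotient.eq_zero_iff_mem, ← Ideal.Quotient.mkₐ_eq_mk K, ← aeval_algHom_apply]
    exact minpoly.aeval K _
  have hchain : aeval x (derivative r) * br y x ∈ J :=
    bracket_aeval leibniz y x r ▸ hRJ (hR y _ hroot)
  refine (hJ.mem_or_mem hchain).resolve_left fun hder => hJ.ne_top ?_
  obtain ⟨a, b, hab⟩ := hsep
  rw [Ideal.eq_top_iff_one, ← map_one (aeval (R := K) x), ← hab, map_add, map_mul, map_mul]
  exact J.add_mem (J.mul_mem_left _ (hRJ hroot)) (J.mul_mem_left _ hder)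

end PoissonBracket

open PoissonBracket in
/-- If `L` is a finite-codimensional Lie ideal of a unital Poisson
algebra `P` over `ℝ`, then either `L` contains the derived ideal `{P,P}`, or there is a
maximal finite-codimensional associative ideal `J` of `P` with `{P,P} ⊆ J`. -/
theorem finite_codim_lie_ideal_dichotomy
    {P : Type*} [CommRing P] [Algebra ℝ P]
    (br : P →ₗ[ℝ] P →ₗ[ℝ] P)
    (anti : ∀ f g : P, br f g = - br g f)
    (jacobi : ∀ f g h : P, br f (br g h) = br (br f g) h + br g (br f h))
    (leibniz : ∀ f g h : P, br f (g * h) = br f g * h + g * br f h)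
    (L : Submodule ℝ P)
    (hL : ∀ f : P, ∀ l ∈ L, br f l ∈ L)
    (hfc : FiniteDimensional ℝ (P ⧸ L)) :
    Submodule.span ℝ {x : P | ∃ f g : P, x = br f g} ≤ L ∨
    ∃ J : Ideal P, J.IsMaximal ∧
      FiniteDimensional ℝ (P ⧸ J.restrictScalars ℝ) ∧
      Submodule.span ℝ {x : P | ∃ f g : P, x = br f g} ≤ J.restrictScalars ℝ := by
  by_cases hall : ∀ f g : P, br f g ∈ L
  · left
    rw [Submodule.span_le]
    rintro _ ⟨f, g, rfl⟩
    exact hall f g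
  right
  obtain ⟨f₀, g₀, hf₀⟩ : ∃ f g, br f g ∉ L := by simpa only [not_forall] using hall
  let C : Subalgebra ℝ P := (centralizerModulo br L).toSubalgebra
    (one_mem_centralizerModulo anti leibniz) fun _ _ => mul_mem_centralizerModulo anti leibniz
  let R : Ideal P := C.conductor.radical
  have hR : ∀ f, ∀ a ∈ R, br f a ∈ R := radical_bracket_mem leibniz
    (conductor_bracket_mem leibniz (bracket_mem_centralizerModulo jacobi hL))
  have hC : (Subalgebra.toSubmodule C).CoFG := centralizerModulo_cofg hL hfc
  have hRfin : (R.restrictScalars ℝ).CoFG := (Subalgebra.conductor_cofg hC).of_le Ideal.le_radical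
  have hRtop : R ≠ ⊤ := by
    rw [Ne, Ideal.radical_eq_top]
    exact Subalgebra.conductor_ne_top fun h => hf₀ (mem_centralizerModulo.mp h g₀)
  obtain ⟨J, hJ, hRJ⟩ := Ideal.exists_le_maximal R hRtop
  refine ⟨J, hJ, hRfin.of_le hRJ, ?_⟩
  rw [Submodule.span_le]
  rintro _ ⟨x, y, rfl⟩
  exact bracket_mem_of_radical_le_prime leibniz hR (Ideal.radical_isRadical _) hRfin hJ.isPrime
    hRJ x y
end

section
/- Let P be a Poisson algebra over ℝ with identity, let L be a Lie ideal of P, set U_L = {f ∈ P : {f,g} ∈ L for all g ∈ P}, and set K = {f ∈ P : f·g ∈ U_L for all g ∈ P}. Then {P, K} ⊆ K, i.e. {f, k} ∈ K for every f ∈ P and k ∈ K. -/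
/-- For a Lie ideal `L` of a unital Poisson algebra `P` over `ℝ`, with
`U_L = {f | {f, P} ⊆ L}` and `K = {f | f·P ⊆ U_L}`, one has `{P, K} ⊆ K`. -/
theorem conductor_is_poisson_stable
    {P : Type*} [CommRing P] [Algebra ℝ P]
    (br : P →ₗ[ℝ] P →ₗ[ℝ] P)
    (anti : ∀ f g : P, br f g = - br g f)
    (jacobi : ∀ f g h : P, br f (br g h) = br (br f g) h + br g (br f h))
    (leibniz : ∀ f g h : P, br f (g * h) = br f g * h + g * br f h)
    (L : Submodule ℝ P)
    (hL : ∀ f : P, ∀ l ∈ L, br f l ∈ L) :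
    ∀ f k : P, (∀ g g' : P, br (k * g) g' ∈ L) →
      ∀ g g' : P, br (br f k * g) g' ∈ L := by
  intro f k hk g g'
  have h1 : br f k * g = br f (k * g) - k * br f g := by
    have := leibniz f k g; linear_combination -this
  rw [h1, map_sub, LinearMap.sub_apply]
  have h2 : br (br f (k * g)) g'
      = br f (br (k * g) g') - br (k * g) (br f g') := by
    have := jacobi f (k * g) g'; linear_combination -this
  refine Submodule.sub_mem _ ?_ (hk (br f g) g')
  rw [h2]
  exact Submodule.sub_mem _ (hL f _ (hk g g')) (hk g (br f g'))
end

section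
/- Let P be a Poisson algebra over ℝ with identity, and let L be a finite-codimensional Lie ideal of P which does not contain the derived ideal {P,P} (the linear span of all brackets). Then there exists a proper associative ideal K of P which is finite-codimensional as a linear subspace and satisfies {P, K} ⊆ K. -/
/-- If `L` is a finite-codimensional Lie ideal of a unital Poisson
algebra `P` over `ℝ` not containing the derived ideal `{P,P}`, then there exists a
proper, finite-codimensional associative ideal `K` of `P` with `{P, K} ⊆ K`. -/
theorem exists_proper_poisson_stable_ideal
    {P : Type*} [CommRing P] [Algebra ℝ P]
    (br : P →ₗ[ℝ] P →ₗ[ℝ] P)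
    (anti : ∀ f g : P, br f g = - br g f)
    (jacobi : ∀ f g h : P, br f (br g h) = br (br f g) h + br g (br f h))
    (leibniz : ∀ f g h : P, br f (g * h) = br f g * h + g * br f h)
    (L : Submodule ℝ P)
    (hL : ∀ f : P, ∀ l ∈ L, br f l ∈ L)
    (hfc : FiniteDimensional ℝ (P ⧸ L))
    (hnot : ¬ Submodule.span ℝ {x : P | ∃ f g : P, x = br f g} ≤ L) :
    ∃ K : Ideal P, K ≠ ⊤ ∧
      FiniteDimensional ℝ (P ⧸ K.restrictScalars ℝ) ∧
      ∀ f : P, ∀ k ∈ K, br f k ∈ K := by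
  classical
  set C : Submodule ℝ P := ⨅ f : P, L.comap (br f) with hCdef
  have memC : ∀ g : P, g ∈ C ↔ ∀ f : P, br f g ∈ L := by
    intro g
    simp [hCdef, Submodule.mem_iInf, Submodule.mem_comap]
  have hLC : L ≤ C := fun l hl => (memC l).2 fun f => hL f l hl
  -- squares identity
  have hsq : ∀ g ∈ C, ∀ u : P, u * br u g ∈ L := by
    intro g hg u
    have h1 : br (u * u) g ∈ L := (memC g).1 hg _
    have h2 : br (u * u) g = u * br u g + u * br u g := by
      rw [anti (u*u) g, leibniz g u u, anti g u]; ring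
    have h3 : u * br u g = (2⁻¹ : ℝ) • br (u * u) g := by
      rw [h2, smul_add, ← add_smul]; norm_num
    rw [h3]; exact L.smul_mem _ h1
  have star : ∀ g ∈ C, ∀ a b : P, a * br b g + b * br a g ∈ L := by
    intro g hg a b
    have hab := hsq g hg (a + b)
    have ha := hsq g hg a
    have hb := hsq g hg b
    have key : a * br b g + b * br a g
        = (a + b) * br (a + b) g - a * br a g - b * br b g := by
      have hadd : br (a + b) g = br a g + br b g := by
        rw [map_add]; rfl
      rw [hadd]; ring
    rw [key]; exact sub_mem (sub_mem hab ha) hb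
  -- C is multiplicatively closed
  have mulC : ∀ g ∈ C, ∀ c ∈ C, g * c ∈ C := by
    intro g hg c hc
    rw [memC]
    intro f
    have key : br f (g * c)
        = (c * br f g + f * br c g) + (g * br f c + f * br g c) := by
      rw [leibniz f g c, anti c g]; ring
    rw [key]
    exact add_mem (star g hg c f) (star c hc g f)
  -- a witness outside C
  obtain ⟨g₀, hg₀⟩ : ∃ g₀ : P, g₀ ∉ C := by
    by_contra h
    push_neg at h
    apply hnot
    rw [Submodule.span_le]
    rintro x ⟨f, g, rfl⟩
    exact (memC g).1 (h g) f
  -- the conductor ideal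
  let K : Ideal P :=
    { carrier := {x : P | ∀ p : P, x * p ∈ C}
      add_mem' := fun {a b} ha hb p => by
        rw [add_mul]; exact add_mem (ha p) (hb p)
      zero_mem' := fun p => by rw [zero_mul]; exact zero_mem C
      smul_mem' := fun c x hx p => by
        have h : (c • x) * p = x * (c * p) := by
          simp [smul_eq_mul]; ring
        rw [h]; exact hx (c * p) }
  have memK : ∀ x : P, x ∈ K ↔ ∀ p : P, x * p ∈ C := fun x => Iff.rfl
  refine ⟨K, ?_, ?_, ?_⟩
  · -- proper
    intro htop
    have h1 : (1 : P) ∈ K := htop ▸ Submodule.mem_top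
    have := (memK 1).1 h1 g₀
    rw [one_mul] at this
    exact hg₀ this
  · -- finite codimension
    have hKC : K.restrictScalars ℝ ≤ C := by
      intro x hx
      have := (memK x).1 hx 1
      rwa [mul_one] at this
    -- P ⧸ C is finite dimensional
    haveI hfC : FiniteDimensional ℝ (P ⧸ C) := by
      have hsurj : Function.Surjective (Submodule.mapQ L C LinearMap.id hLC) := by
        intro x
        obtain ⟨p, rfl⟩ := Submodule.mkQ_surjective C x
        exact ⟨L.mkQ p, by rw [Submodule.mkQ_apply, Submodule.mapQ_apply]; rfl⟩
      exact Module.Finite.of_surjective _ hsurj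
    -- multiplication map into End(P ⧸ C)
    have hcond : ∀ x : C, C ≤ C.comap (LinearMap.mul ℝ P (x : P)) := by
      intro x c hc
      exact mulC (x : P) x.2 c hc
    let Φ : C →ₗ[ℝ] ((P ⧸ C) →ₗ[ℝ] (P ⧸ C)) :=
      { toFun := fun x => Submodule.mapQ C C (LinearMap.mul ℝ P (x : P)) (hcond x)
        map_add' := by
          intro x y
          apply Submodule.linearMap_qext
          ext p
          simp [Submodule.mapQ_apply, add_mul]
        map_smul' := by
          intro c x
          apply Submodule.linearMap_qext
          ext p
          simp [Submodule.mapQ_apply, smul_mul_assoc] }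
    have hΦ : ∀ x : C, Φ x = 0 ↔ ∀ p : P, (x : P) * p ∈ C := by
      intro x
      constructor
      · intro h p
        have h2 := LinearMap.ext_iff.1 h (C.mkQ p)
        rw [Submodule.mkQ_apply] at h2
        have h3 : Φ x (Submodule.Quotient.mk p) = Submodule.Quotient.mk ((x : P) * p) := by
          simp [Φ, Submodule.mapQ_apply]
        rw [h3] at h2
        simpa [Submodule.Quotient.mk_eq_zero] using h2
      · intro h
        apply Submodule.linearMap_qext
        ext p
        simpa [Φ, Submodule.mapQ_apply, Submodule.Quotient.mk_eq_zero] using h p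
    let ψ : C →ₗ[ℝ] (P ⧸ K.restrictScalars ℝ) :=
      (K.restrictScalars ℝ).mkQ.comp C.subtype
    have hker : LinearMap.ker ψ = LinearMap.ker Φ := by
      ext x
      simp only [LinearMap.mem_ker, ψ, LinearMap.comp_apply, Submodule.subtype_apply,
        Submodule.mkQ_apply, Submodule.Quotient.mk_eq_zero]
      rw [hΦ x]
      exact (memK (x : P))
    haveI : FiniteDimensional ℝ (C ⧸ LinearMap.ker ψ) := by
      rw [hker]
      exact Module.Finite.equiv (LinearMap.quotKerEquivRange Φ).symm
    haveI hrange : FiniteDimensional ℝ (LinearMap.range ψ) :=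
      Module.Finite.equiv (LinearMap.quotKerEquivRange ψ)
    have hrangeeq : LinearMap.range ψ = C.map (K.restrictScalars ℝ).mkQ := by
      rw [LinearMap.range_comp, Submodule.range_subtype]
    haveI hS : FiniteDimensional ℝ (C.map (K.restrictScalars ℝ).mkQ) := by
      rw [← hrangeeq]; exact hrange
    haveI hQ : FiniteDimensional ℝ
        ((P ⧸ K.restrictScalars ℝ) ⧸ C.map (K.restrictScalars ℝ).mkQ) :=
      Module.Finite.equiv
        (Submodule.quotientQuotientEquivQuotient (K.restrictScalars ℝ) C hKC).symm
    have := (isNoetherian_iff_submodule_quotient (C.map (K.restrictScalars ℝ).mkQ)).2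
      ⟨IsNoetherian.iff_fg.2 hS, IsNoetherian.iff_fg.2 hQ⟩
    exact IsNoetherian.iff_fg.1 this
  · -- Poisson stability
    intro f k hk
    rw [memK]
    intro p
    have h1 : br f (k * p) ∈ L := (memC (k * p)).1 ((memK k).1 hk p) f
    have h2 : k * br f p ∈ C := (memK k).1 hk (br f p)
    have key : br f k * p = br f (k * p) - k * br f p := by
      rw [leibniz f k p]; ring
    rw [key]
    exact sub_mem (hLC h1) h2
end

section
/- Let R = ℝ[X,Y,Z]/(X² + Y² + Z² − 1), the ring of polynomial functions on the unit sphere S², and write x, y, z for the images of X, Y, Z in R. Suppose {·,·} : R × R → R is a bilinear, antisymmetric bracket satisfying the Jacobi identity and the Leibniz rule {f, gh} = {f,g}h + g{f,h}, and satisfying {x,y} = z, {y,z} = x, {z,x} = y. Then for every finite-dimensional real vector space V and every Lie algebra homomorphism ρ from (R, {·,·}) to the endomorphisms of V with the commutator bracket, one has ρ({f,g}) = 0 for all f, g ∈ R; i.e., there is no nontrivial finite-dimensional Lie representation of the Poisson algebra of polynomials (spherical harmonics) on S². -/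
open MvPolynomial in
/-- The ring of polynomial functions on the unit sphere `S²`:
`ℝ[X,Y,Z] / (X² + Y² + Z² - 1)`. -/
noncomputable abbrev SphereRing : Type :=
  MvPolynomial (Fin 3) ℝ ⧸
    Ideal.span {(X 0 : MvPolynomial (Fin 3) ℝ) ^ 2 + X 1 ^ 2 + X 2 ^ 2 - 1}

open MvPolynomial in
/-- The image of `X` in the sphere ring. -/
noncomputable def sphereX : SphereRing :=
  Ideal.Quotient.mk _ (X 0)

open MvPolynomial in
/-- The image of `Y` in the sphere ring. -/
noncomputable def sphereY : SphereRing :=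
  Ideal.Quotient.mk _ (X 1)

open MvPolynomial in
/-- The image of `Z` in the sphere ring. -/
noncomputable def sphereZ : SphereRing :=
  Ideal.Quotient.mk _ (X 2)

/-!
The kernel `I` of a Lie representation `ρ` is stable under brackets and has finite codimension.
The operator `{x, ·}` rotates `sphereP m` and `sphereQ m`, so `{x, {x, ·}}` acts by `-m²` on the
span of the `x ^ a * sphereP m` and `x ^ a * sphereQ m`; since `(ad ρ x)²` has finitely many
eigenvalues, these weight spaces lie in `I` for large `m`. Brackets with `y` and `z` lower the
weight by one, and two independent such identities push this down to every `m ≥ 1`. In weight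
`0`, `x = {y, z} ∈ I` and `x ^ (c + 2)` is a multiple of `x ^ c` modulo `I`, so
`R = ℝ ∙ 1 + I`; since `{f, 1} = 0`, every bracket lies in `I`.
-/

open MvPolynomial Submodule

theorem Submodule.add_mem_and_sub_mem_iff {K M : Type*} [DivisionRing K] [NeZero (2 : K)]
    [AddCommGroup M] [Module K M] {p : Submodule K M} {a b : M} :
    a + b ∈ p ∧ a - b ∈ p ↔ a ∈ p ∧ b ∈ p := by
  refine ⟨fun ⟨hadd, hsub⟩ => ?_, fun ⟨ha, hb⟩ => ⟨add_mem ha hb, sub_mem ha hb⟩⟩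
  have h2 : (2 : K) • a ∈ p := by
    rw [two_smul]; convert add_mem hadd hsub using 1; abel
  have ha := (smul_mem_iff p two_ne_zero).mp h2
  exact ⟨ha, by simpa using sub_mem ha hsub⟩

theorem Submodule.mem_of_nsmul_sub_nsmul_mem {K M : Type*} [DivisionRing K] [CharZero K]
    [AddCommGroup M] [Module K M] {p : Submodule K M} {α β : M} {c c' d : ℕ} (hc : c ≠ c')
    (hd : d ≠ 0) (h : c • (α - β) - d • β ∈ p) (h' : c' • (α - β) - d • β ∈ p) :
    α ∈ p ∧ β ∈ p := by
  have hdiff : ((c : K) - c') • (α - β) ∈ p := by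
    convert sub_mem h h' using 1
    rw [sub_smul, Nat.cast_smul_eq_nsmul, Nat.cast_smul_eq_nsmul]; abel
  have hαβ := (smul_mem_iff p (sub_ne_zero.mpr (Nat.cast_injective.ne hc))).mp hdiff
  have hβ : β ∈ p := by
    refine (smul_mem_iff p (Nat.cast_ne_zero.mpr hd : (d : K) ≠ 0)).mp ?_
    rw [Nat.cast_smul_eq_nsmul]
    convert sub_mem (nsmul_mem hαβ c) h using 1; abel
  exact ⟨by simpa using add_mem hαβ hβ, hβ⟩

theorem Module.End.finite_setOf_not_eigenspace_le_ker {K A W : Type*} [Field K]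
    [AddCommGroup A] [Module K A] [AddCommGroup W] [Module K W] [FiniteDimensional K W]
    {ρ : A →ₗ[K] W} {T : Module.End K A} {S : Module.End K W} (h : ρ ∘ₗ T = S ∘ₗ ρ) :
    {c | ¬T.eigenspace c ≤ LinearMap.ker ρ}.Finite := by
  refine S.finite_hasEigenvalue.subset fun c hc => ?_
  obtain ⟨g, hg, hρg⟩ := Set.not_subset.mp hc
  refine S.hasEigenvalue_of_hasEigenvector ⟨Module.End.mem_eigenspace_iff.mpr ?_, hρg⟩
  rw [← LinearMap.comp_apply, ← h, LinearMap.comp_apply, Module.End.mem_eigenspace_iff.mp hg,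
    map_smul]

structure LeibnizBracket (K A : Type*) [Field K] [CommRing A] [Algebra K A] where
  br : A →ₗ[K] A →ₗ[K] A
  anti : ∀ f g, br f g = -br g f
  leibniz : ∀ f g h, br f (g * h) = br f g * h + g * br f h

namespace LeibnizBracket

variable {K A : Type*} [Field K] [CommRing A] [Algebra K A] (B : LeibnizBracket K A)

theorem br_self [NeZero (2 : K)] (f : A) : B.br f f = 0 := by
  have h : (2 : K) • B.br f f = 0 := by
    rw [two_smul]; nth_rewrite 2 [B.anti]; exact add_neg_cancel _
  exact (smul_eq_zero.mp h).resolve_left two_ne_zero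

theorem br_one (f : A) : B.br f 1 = 0 := by
  simpa using B.leibniz f 1 1

theorem leibniz_left (f g h : A) : B.br (g * h) f = B.br g f * h + g * B.br h f := by
  rw [B.anti, B.leibniz, B.anti g, B.anti h]; ring

end LeibnizBracket

theorem sphereX_sq_add_sphereY_sq_add_sphereZ_sq :
    sphereX ^ 2 + sphereY ^ 2 + sphereZ ^ 2 = (1 : SphereRing) := by
  have h : Ideal.Quotient.mk _ (X 0 ^ 2 + X 1 ^ 2 + X 2 ^ 2 - 1 : MvPolynomial (Fin 3) ℝ) =
      (0 : SphereRing) :=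
    Ideal.Quotient.eq_zero_iff_mem.mpr (Ideal.subset_span rfl)
  simp only [map_sub, map_add, map_pow, map_one] at h
  exact sub_eq_zero.mp h

/-- `sphereP m + i * sphereQ m = (y + i z) ^ m`. -/
noncomputable def spherePQ : ℕ → SphereRing × SphereRing
  | 0 => (1, 0)
  | m + 1 => (sphereY * (spherePQ m).1 - sphereZ * (spherePQ m).2,
      sphereZ * (spherePQ m).1 + sphereY * (spherePQ m).2)

noncomputable def sphereP (m : ℕ) : SphereRing := (spherePQ m).1

noncomputable def sphereQ (m : ℕ) : SphereRing := (spherePQ m).2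

theorem sphereP_zero : sphereP 0 = 1 := rfl

theorem sphereQ_zero : sphereQ 0 = 0 := rfl

theorem sphereP_succ (m : ℕ) : sphereP (m + 1) = sphereY * sphereP m - sphereZ * sphereQ m := rfl

theorem sphereQ_succ (m : ℕ) : sphereQ (m + 1) = sphereZ * sphereP m + sphereY * sphereQ m := rfl

theorem sphereP_one : sphereP 1 = sphereY := by
  rw [sphereP_succ, sphereP_zero, sphereQ_zero]; ring

theorem sphereQ_one : sphereQ 1 = sphereZ := by
  rw [sphereQ_succ, sphereP_zero, sphereQ_zero]; ring

theorem sphereY_mul_sphereP_add_sphereZ_mul_sphereQ (m : ℕ) :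
    sphereY * sphereP (m + 1) + sphereZ * sphereQ (m + 1) = (1 - sphereX ^ 2) * sphereP m := by
  rw [sphereP_succ, sphereQ_succ]
  linear_combination sphereP m * sphereX_sq_add_sphereY_sq_add_sphereZ_sq

theorem sphereY_mul_sphereQ_sub_sphereZ_mul_sphereP (m : ℕ) :
    sphereY * sphereQ (m + 1) - sphereZ * sphereP (m + 1) = (1 - sphereX ^ 2) * sphereQ m := by
  rw [sphereP_succ, sphereQ_succ]
  linear_combination sphereQ m * sphereX_sq_add_sphereY_sq_add_sphereZ_sq

/-- Weight `m` for the rotations about the `x`-axis, generated by `{x, ·}`. -/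
noncomputable def weightSpace (m : ℕ) : Submodule ℝ SphereRing :=
  span ℝ {v | ∃ a, v = sphereX ^ a * sphereP m ∨ v = sphereX ^ a * sphereQ m}

theorem sphereX_pow_mul_sphereP_mem_weightSpace (a m : ℕ) :
    sphereX ^ a * sphereP m ∈ weightSpace m :=
  subset_span ⟨a, .inl rfl⟩

theorem sphereX_pow_mul_sphereQ_mem_weightSpace (a m : ℕ) :
    sphereX ^ a * sphereQ m ∈ weightSpace m :=
  subset_span ⟨a, .inr rfl⟩

theorem weightSpace_le_iff {m : ℕ} {p : Submodule ℝ SphereRing} :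
    weightSpace m ≤ p ↔
      ∀ a, sphereX ^ a * sphereP m ∈ p ∧ sphereX ^ a * sphereQ m ∈ p := by
  refine span_le.trans ⟨fun h a => ⟨h ⟨a, .inl rfl⟩, h ⟨a, .inr rfl⟩⟩, ?_⟩
  rintro h v ⟨a, rfl | rfl⟩
  exacts [(h a).1, (h a).2]

section Span

local notation "𝒮" => ⨆ m, weightSpace m

theorem sphereP_mem_iSup_weightSpace (m : ℕ) : sphereP m ∈ 𝒮 :=
  mem_iSup_of_mem m (by simpa using sphereX_pow_mul_sphereP_mem_weightSpace 0 m)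

theorem sphereQ_mem_iSup_weightSpace (m : ℕ) : sphereQ m ∈ 𝒮 :=
  mem_iSup_of_mem m (by simpa using sphereX_pow_mul_sphereQ_mem_weightSpace 0 m)

theorem mul_mem_iSup_weightSpace {g : SphereRing}
    (h : ∀ a m, g * (sphereX ^ a * sphereP m) ∈ 𝒮 ∧ g * (sphereX ^ a * sphereQ m) ∈ 𝒮)
    {v : SphereRing} (hv : v ∈ 𝒮) : g * v ∈ 𝒮 := by
  suffices 𝒮 ≤ (𝒮).comap (LinearMap.mulLeft ℝ g) from this hv
  exact iSup_le fun m => weightSpace_le_iff.mpr fun a => h a m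

theorem sphereX_pow_mul_mem_iSup_weightSpace (a : ℕ) {v : SphereRing} (hv : v ∈ 𝒮) :
    sphereX ^ a * v ∈ 𝒮 := by
  induction a with
  | zero => simpa using hv
  | succ a ih =>
    rw [pow_succ' sphereX a, mul_assoc]
    refine mul_mem_iSup_weightSpace (fun b m => ⟨?_, ?_⟩) ih <;>
      rw [← mul_assoc, ← pow_succ' sphereX b]
    exacts [mem_iSup_of_mem m (sphereX_pow_mul_sphereP_mem_weightSpace _ m),
      mem_iSup_of_mem m (sphereX_pow_mul_sphereQ_mem_weightSpace _ m)]

theorem sphereY_mul_sphereP_mem_and_sphereZ_mul_sphereQ_mem (m : ℕ) :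
    sphereY * sphereP m ∈ 𝒮 ∧ sphereZ * sphereQ m ∈ 𝒮 := by
  cases m with
  | zero =>
    rw [sphereP_zero, sphereQ_zero, mul_one, mul_zero, ← sphereP_one]
    exact ⟨sphereP_mem_iSup_weightSpace 1, zero_mem _⟩
  | succ m =>
    refine add_mem_and_sub_mem_iff.mp ⟨?_, ?_⟩
    · rw [sphereY_mul_sphereP_add_sphereZ_mul_sphereQ, sub_mul, one_mul]
      exact sub_mem (sphereP_mem_iSup_weightSpace m)
        (sphereX_pow_mul_mem_iSup_weightSpace 2 (sphereP_mem_iSup_weightSpace m))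
    · rw [← sphereP_succ]
      exact sphereP_mem_iSup_weightSpace (m + 2)

theorem sphereY_mul_sphereQ_mem_and_sphereZ_mul_sphereP_mem (m : ℕ) :
    sphereY * sphereQ m ∈ 𝒮 ∧ sphereZ * sphereP m ∈ 𝒮 := by
  cases m with
  | zero =>
    rw [sphereP_zero, sphereQ_zero, mul_one, mul_zero, ← sphereQ_one]
    exact ⟨zero_mem _, sphereQ_mem_iSup_weightSpace 1⟩
  | succ m =>
    refine add_mem_and_sub_mem_iff.mp ⟨?_, ?_⟩
    · rw [add_comm (sphereY * _), ← sphereQ_succ]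
      exact sphereQ_mem_iSup_weightSpace (m + 2)
    · rw [sphereY_mul_sphereQ_sub_sphereZ_mul_sphereP, sub_mul, one_mul]
      exact sub_mem (sphereQ_mem_iSup_weightSpace m)
        (sphereX_pow_mul_mem_iSup_weightSpace 2 (sphereQ_mem_iSup_weightSpace m))

theorem sphereY_mul_mem_iSup_weightSpace {v : SphereRing} (hv : v ∈ 𝒮) :
    sphereY * v ∈ 𝒮 :=
  mul_mem_iSup_weightSpace (fun a m => by
    simp only [mul_left_comm sphereY (sphereX ^ a)]
    exact ⟨sphereX_pow_mul_mem_iSup_weightSpace a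
        (sphereY_mul_sphereP_mem_and_sphereZ_mul_sphereQ_mem m).1,
      sphereX_pow_mul_mem_iSup_weightSpace a
        (sphereY_mul_sphereQ_mem_and_sphereZ_mul_sphereP_mem m).1⟩) hv

theorem sphereZ_mul_mem_iSup_weightSpace {v : SphereRing} (hv : v ∈ 𝒮) :
    sphereZ * v ∈ 𝒮 :=
  mul_mem_iSup_weightSpace (fun a m => by
    simp only [mul_left_comm sphereZ (sphereX ^ a)]
    exact ⟨sphereX_pow_mul_mem_iSup_weightSpace a
        (sphereY_mul_sphereQ_mem_and_sphereZ_mul_sphereP_mem m).2,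
      sphereX_pow_mul_mem_iSup_weightSpace a
        (sphereY_mul_sphereP_mem_and_sphereZ_mul_sphereQ_mem m).2⟩) hv

theorem iSup_weightSpace_eq_top : 𝒮 = ⊤ := by
  refine eq_top_iff'.mpr fun v => ?_
  obtain ⟨p, rfl⟩ := Ideal.Quotient.mk_surjective v
  induction p using MvPolynomial.induction_on with
  | C r =>
    rw [← MvPolynomial.algebraMap_eq, ← Ideal.Quotient.algebraMap_eq,
      ← IsScalarTower.algebraMap_apply, Algebra.algebraMap_eq_smul_one]
    exact smul_mem _ r (sphereP_zero ▸ sphereP_mem_iSup_weightSpace 0)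
  | add p q hp hq => rw [map_add]; exact add_mem hp hq
  | mul_X p i hp =>
    rw [map_mul, mul_comm]
    fin_cases i
    · simpa [sphereX] using sphereX_pow_mul_mem_iSup_weightSpace 1 hp
    · exact sphereY_mul_mem_iSup_weightSpace hp
    · exact sphereZ_mul_mem_iSup_weightSpace hp

end Span

structure SphereBracket extends LeibnizBracket ℝ SphereRing where
  br_x_y : br sphereX sphereY = sphereZ
  br_y_z : br sphereY sphereZ = sphereX
  br_z_x : br sphereZ sphereX = sphereY

namespace SphereBracket

variable (B : SphereBracket)

theorem br_y_x : B.br sphereY sphereX = -sphereZ := by rw [B.anti, B.br_x_y]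

theorem br_z_y : B.br sphereZ sphereY = -sphereX := by rw [B.anti, B.br_y_z]

theorem br_x_z : B.br sphereX sphereZ = -sphereY := by rw [B.anti, B.br_z_x]

theorem br_x_pow (n : ℕ) : B.br sphereX (sphereX ^ n) = 0 := by
  induction n with
  | zero => exact B.br_one _
  | succ n ih => rw [pow_succ sphereX n, B.leibniz, ih, B.br_self]; ring

theorem br_y_pow_succ (n : ℕ) :
    B.br sphereY (sphereX ^ (n + 1)) = -((n + 1) • (sphereX ^ n * sphereZ)) := by
  induction n with
  | zero => simp [B.br_y_x]
  | succ n ih => rw [pow_succ sphereX (n + 1), B.leibniz, ih, B.br_y_x]; ring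

theorem br_z_pow_succ (n : ℕ) :
    B.br sphereZ (sphereX ^ (n + 1)) = (n + 1) • (sphereX ^ n * sphereY) := by
  induction n with
  | zero => simp [B.br_z_x]
  | succ n ih => rw [pow_succ sphereX (n + 1), B.leibniz, ih, B.br_z_x]; ring

theorem br_pow_succ_left (n : ℕ) (f : SphereRing) :
    B.br (sphereX ^ (n + 1)) f = (n + 1) • (sphereX ^ n * B.br sphereX f) := by
  induction n with
  | zero => simp
  | succ n ih => rw [pow_succ sphereX (n + 1), B.leibniz_left, ih]; ring

theorem br_x_sphereP_and_sphereQ (m : ℕ) :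
    B.br sphereX (sphereP m) = m • sphereQ m ∧
      B.br sphereX (sphereQ m) = -(m • sphereP m) := by
  induction m with
  | zero => simp [sphereP_zero, sphereQ_zero, B.br_one]
  | succ m ih =>
    rw [sphereP_succ, sphereQ_succ, map_sub, map_add, B.leibniz, B.leibniz, B.leibniz,
      B.leibniz, ih.1, ih.2, B.br_x_y, B.br_x_z]
    constructor <;> ring

theorem br_y_z_sphereP_and_sphereQ (m : ℕ) :
    B.br sphereY (sphereP (m + 1)) = -((m + 1) • (sphereX * sphereQ m)) ∧
    B.br sphereY (sphereQ (m + 1)) = (m + 1) • (sphereX * sphereP m) ∧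
    B.br sphereZ (sphereP (m + 1)) = -((m + 1) • (sphereX * sphereP m)) ∧
    B.br sphereZ (sphereQ (m + 1)) = -((m + 1) • (sphereX * sphereQ m)) := by
  induction m with
  | zero => simp [sphereP_succ, sphereQ_succ, sphereP_zero, sphereQ_zero, B.br_self, B.br_y_z,
      B.br_z_y]
  | succ m ih =>
    obtain ⟨hyP, hyQ, hzP, hzQ⟩ := ih
    rw [sphereP_succ (m + 1), sphereQ_succ (m + 1)]
    simp only [map_sub, map_add, B.leibniz, hyP, hyQ, hzP, hzQ, B.br_self, B.br_y_z, B.br_z_y]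
    rw [sphereP_succ m, sphereQ_succ m]
    refine ⟨?_, ?_, ?_, ?_⟩ <;> ring

theorem br_x_sphereX_pow_mul_sphereP (a m : ℕ) :
    B.br sphereX (sphereX ^ a * sphereP m) = m • (sphereX ^ a * sphereQ m) := by
  rw [B.leibniz, B.br_x_pow, (B.br_x_sphereP_and_sphereQ m).1]; ring

theorem br_x_sphereX_pow_mul_sphereQ (a m : ℕ) :
    B.br sphereX (sphereX ^ a * sphereQ m) = -(m • (sphereX ^ a * sphereP m)) := by
  rw [B.leibniz, B.br_x_pow, (B.br_x_sphereP_and_sphereQ m).2]; ring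

theorem weightSpace_le_eigenspace (m : ℕ) :
    weightSpace m ≤ Module.End.eigenspace (B.br sphereX * B.br sphereX) (-(m : ℝ) ^ 2) := by
  refine weightSpace_le_iff.mpr fun a => ⟨?_, ?_⟩ <;>
    rw [Module.End.mem_eigenspace_iff, Module.End.mul_apply]
  · rw [B.br_x_sphereX_pow_mul_sphereP, map_nsmul, B.br_x_sphereX_pow_mul_sphereQ,
      ← Nat.cast_smul_eq_nsmul ℝ]
    module
  · rw [B.br_x_sphereX_pow_mul_sphereQ, map_neg, map_nsmul, B.br_x_sphereX_pow_mul_sphereP,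
      ← Nat.cast_smul_eq_nsmul ℝ]
    module

theorem finite_setOf_not_weightSpace_le_ker {V : Type*} [AddCommGroup V] [Module ℝ V]
    [FiniteDimensional ℝ V] (ρ : SphereRing →ₗ[ℝ] Module.End ℝ V)
    (hρ : ∀ f g, ρ (B.br f g) = ρ f * ρ g - ρ g * ρ f) :
    {m | ¬weightSpace m ≤ LinearMap.ker ρ}.Finite := by
  let D := LinearMap.mulLeft ℝ (ρ sphereX) - LinearMap.mulRight ℝ (ρ sphereX)
  have hρD : ρ ∘ₗ (B.br sphereX * B.br sphereX) = (D * D) ∘ₗ ρ := by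
    refine LinearMap.ext fun g => ?_
    simp only [LinearMap.comp_apply, Module.End.mul_apply, D, LinearMap.sub_apply,
      LinearMap.mulLeft_apply, LinearMap.mulRight_apply, hρ]
  have hinj : Function.Injective fun m : ℕ => -(m : ℝ) ^ 2 := fun m n h => by simpa using h
  refine ((Module.End.finite_setOf_not_eigenspace_le_ker hρD).preimage hinj.injOn).subset
    fun m hm h => hm ((B.weightSpace_le_eigenspace m).trans h)

/-- Both lowering identities express brackets of weight `m + 1` elements through
`x ^ e * sphereP m` and `x ^ (e + 2) * sphereP m`, with independent coefficients once `m ≠ 0`. -/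
theorem lower_sphereP_right (e m : ℕ) :
    B.br sphereZ (sphereX ^ (e + 1) * sphereP (m + 1)) -
        B.br sphereY (sphereX ^ (e + 1) * sphereQ (m + 1)) =
      (e + 1) • (sphereX ^ e * sphereP m - sphereX ^ (e + 2) * sphereP m) -
        (2 * m + 2) • (sphereX ^ (e + 2) * sphereP m) := by
  obtain ⟨-, hyQ, hzP, -⟩ := B.br_y_z_sphereP_and_sphereQ m
  rw [B.leibniz, B.leibniz, B.br_y_pow_succ, B.br_z_pow_succ, hyQ, hzP]
  linear_combination ((e : SphereRing) + 1) * sphereX ^ e *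
    sphereY_mul_sphereP_add_sphereZ_mul_sphereQ m

theorem lower_sphereP_left (e m : ℕ) :
    B.br (sphereX ^ (e + 1) * sphereZ) (sphereP (m + 1)) -
        B.br (sphereX ^ (e + 1) * sphereY) (sphereQ (m + 1)) =
      ((e + 1) * (m + 1)) • (sphereX ^ e * sphereP m - sphereX ^ (e + 2) * sphereP m) -
        (2 * m + 2) • (sphereX ^ (e + 2) * sphereP m) := by
  obtain ⟨-, hyQ, hzP, -⟩ := B.br_y_z_sphereP_and_sphereQ m
  obtain ⟨hxP, hxQ⟩ := B.br_x_sphereP_and_sphereQ (m + 1)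
  rw [B.leibniz_left, B.leibniz_left, B.br_pow_succ_left, B.br_pow_succ_left, hxP, hxQ,
    hyQ, hzP, mul_smul]
  linear_combination ((e : SphereRing) + 1) * ((m : SphereRing) + 1) * sphereX ^ e *
    sphereY_mul_sphereP_add_sphereZ_mul_sphereQ m

theorem lower_sphereQ_right (e m : ℕ) :
    B.br sphereY (sphereX ^ (e + 1) * sphereP (m + 1)) +
        B.br sphereZ (sphereX ^ (e + 1) * sphereQ (m + 1)) =
      (e + 1) • (sphereX ^ e * sphereQ m - sphereX ^ (e + 2) * sphereQ m) -
        (2 * m + 2) • (sphereX ^ (e + 2) * sphereQ m) := by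
  obtain ⟨hyP, -, -, hzQ⟩ := B.br_y_z_sphereP_and_sphereQ m
  rw [B.leibniz, B.leibniz, B.br_y_pow_succ, B.br_z_pow_succ, hyP, hzQ]
  linear_combination ((e : SphereRing) + 1) * sphereX ^ e *
    sphereY_mul_sphereQ_sub_sphereZ_mul_sphereP m

theorem lower_sphereQ_left (e m : ℕ) :
    B.br (sphereX ^ (e + 1) * sphereY) (sphereP (m + 1)) +
        B.br (sphereX ^ (e + 1) * sphereZ) (sphereQ (m + 1)) =
      ((e + 1) * (m + 1)) • (sphereX ^ e * sphereQ m - sphereX ^ (e + 2) * sphereQ m) -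
        (2 * m + 2) • (sphereX ^ (e + 2) * sphereQ m) := by
  obtain ⟨hyP, -, -, hzQ⟩ := B.br_y_z_sphereP_and_sphereQ m
  obtain ⟨hxP, hxQ⟩ := B.br_x_sphereP_and_sphereQ (m + 1)
  rw [B.leibniz_left, B.leibniz_left, B.br_pow_succ_left, B.br_pow_succ_left, hxP, hxQ,
    hyP, hzQ, mul_smul]
  linear_combination ((e : SphereRing) + 1) * ((m : SphereRing) + 1) * sphereX ^ e *
    sphereY_mul_sphereQ_sub_sphereZ_mul_sphereP m

theorem lower_sphereX_pow (c : ℕ) :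
    B.br sphereZ (sphereX ^ (c + 1) * sphereY) - B.br sphereY (sphereX ^ (c + 1) * sphereZ) =
      (c + 1) • sphereX ^ c - (c + 3) • sphereX ^ (c + 2) := by
  rw [B.leibniz, B.leibniz, B.br_y_pow_succ, B.br_z_pow_succ, B.br_z_y, B.br_y_z]
  linear_combination ((c : SphereRing) + 1) * sphereX ^ c *
    sphereX_sq_add_sphereY_sq_add_sphereZ_sq

variable {I : Submodule ℝ SphereRing}

def IsIdeal (I : Submodule ℝ SphereRing) : Prop :=
  ∀ f g, g ∈ I → B.br f g ∈ I

variable {B}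

theorem IsIdeal.weightSpace_le_of_succ (hI : B.IsIdeal I) {m : ℕ} (hm : m ≠ 0)
    (h : weightSpace (m + 1) ≤ I) : weightSpace m ≤ I := by
  have hmem := weightSpace_le_iff.mp h
  have h0 : sphereP (m + 1) ∈ I ∧ sphereQ (m + 1) ∈ I := by simpa using hmem 0
  have hne (a : ℕ) : a + 1 ≠ (a + 1) * (m + 1) :=
    (lt_mul_of_one_lt_right (by omega) (by omega)).ne
  refine weightSpace_le_iff.mpr fun a => ⟨?_, ?_⟩
  · have hright := sub_mem (hI sphereZ _ (hmem (a + 1)).1) (hI sphereY _ (hmem (a + 1)).2)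
    have hleft := sub_mem (hI (sphereX ^ (a + 1) * sphereZ) _ h0.1)
      (hI (sphereX ^ (a + 1) * sphereY) _ h0.2)
    rw [B.lower_sphereP_right] at hright
    rw [B.lower_sphereP_left] at hleft
    exact (mem_of_nsmul_sub_nsmul_mem (K := ℝ) (hne a) (by omega) hright hleft).1
  · have hright := add_mem (hI sphereY _ (hmem (a + 1)).1) (hI sphereZ _ (hmem (a + 1)).2)
    have hleft := add_mem (hI (sphereX ^ (a + 1) * sphereY) _ h0.1)
      (hI (sphereX ^ (a + 1) * sphereZ) _ h0.2)
    rw [B.lower_sphereQ_right] at hright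
    rw [B.lower_sphereQ_left] at hleft
    exact (mem_of_nsmul_sub_nsmul_mem (K := ℝ) (hne a) (by omega) hright hleft).1

theorem IsIdeal.weightSpace_le (hI : B.IsIdeal I)
    (hfin : {m | ¬weightSpace m ≤ I}.Finite) {m : ℕ} (hm : m ≠ 0) : weightSpace m ≤ I := by
  obtain ⟨n, rfl⟩ := Nat.exists_eq_succ_of_ne_zero hm
  refine Nat.decreasing_induction_of_infinite (P := fun n => weightSpace (n + 1) ≤ I)
    (fun n => hI.weightSpace_le_of_succ n.succ_ne_zero) ?_ n
  exact (hfin.preimage Nat.succ_injective.injOn).infinite_compl.mono fun n hn => not_not.mp hn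

theorem IsIdeal.sphereX_pow_mem (hI : B.IsIdeal I) (h : weightSpace 1 ≤ I) (c : ℕ) :
    sphereX ^ c ∈ (ℝ ∙ 1) ⊔ I := by
  have hmem := weightSpace_le_iff.mp h
  simp only [sphereP_one, sphereQ_one] at hmem
  induction c using Nat.twoStepInduction with
  | zero => exact mem_sup_left (by simp)
  | one =>
    refine mem_sup_right ?_
    rw [pow_one, ← B.br_y_z]
    exact hI _ _ (by simpa using (hmem 0).2)
  | more c ih _ =>
    have hlow : (c + 1) • sphereX ^ c - (c + 3) • sphereX ^ (c + 2) ∈ I := by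
      rw [← B.lower_sphereX_pow]
      exact sub_mem (hI _ _ (hmem (c + 1)).1) (hI _ _ (hmem (c + 1)).2)
    have hc : ((c + 3 : ℕ) : ℝ) ≠ 0 := Nat.cast_ne_zero.mpr (by omega)
    refine (smul_mem_iff _ hc).mp ?_
    rw [Nat.cast_smul_eq_nsmul]
    convert sub_mem (nsmul_mem ih (c + 1)) (mem_sup_right hlow) using 1
    abel

theorem IsIdeal.br_mem (hI : B.IsIdeal I) (h : ∀ m ≠ 0, weightSpace m ≤ I)
    (f g : SphereRing) : B.br f g ∈ I := by
  have htop : (ℝ ∙ 1) ⊔ I = ⊤ := by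
    refine eq_top_iff.mpr (iSup_weightSpace_eq_top.symm.le.trans (iSup_le fun m => ?_))
    rcases eq_or_ne m 0 with rfl | hm
    · refine weightSpace_le_iff.mpr fun a => ⟨?_, ?_⟩
      · simpa [sphereP_zero] using hI.sphereX_pow_mem (h 1 one_ne_zero) a
      · simp [sphereQ_zero]
    · exact (h m hm).trans le_sup_right
  obtain ⟨u, hu, i, hi, rfl⟩ := mem_sup.mp (htop ▸ mem_top : g ∈ (ℝ ∙ 1) ⊔ I)
  obtain ⟨r, rfl⟩ := mem_span_singleton.mp hu
  rw [map_add, map_smul, B.br_one, smul_zero, zero_add]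
  exact hI f i hi

end SphereBracket

theorem sphere_no_nontrivial_finite_dim_lie_rep_general
    (br : SphereRing →ₗ[ℝ] SphereRing →ₗ[ℝ] SphereRing)
    (anti : ∀ f g : SphereRing, br f g = - br g f)
    (leibniz : ∀ f g h : SphereRing, br f (g * h) = br f g * h + g * br f h)
    (hxy : br sphereX sphereY = sphereZ)
    (hyz : br sphereY sphereZ = sphereX)
    (hzx : br sphereZ sphereX = sphereY) :
    ∀ (V : Type) [AddCommGroup V] [Module ℝ V] [FiniteDimensional ℝ V]
      (ρ : SphereRing →ₗ[ℝ] Module.End ℝ V),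
      (∀ f g : SphereRing, ρ (br f g) = ρ f * ρ g - ρ g * ρ f) →
      ∀ f g : SphereRing, ρ (br f g) = 0 := by
  intro V _ _ _ ρ hρ
  let B : SphereBracket := ⟨⟨br, anti, leibniz⟩, hxy, hyz, hzx⟩
  have hker : B.IsIdeal (LinearMap.ker ρ) := fun f g hg => by
    rw [LinearMap.mem_ker] at hg ⊢
    rw [hρ, hg, mul_zero, zero_mul, sub_zero]
  have hfin := B.finite_setOf_not_weightSpace_le_ker ρ hρ
  exact hker.br_mem fun m hm => hker.weightSpace_le hfin hm

/-- For any Poisson bracket on the ring of polynomials on `S²`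
satisfying the su(2) relations `{x,y} = z`, `{y,z} = x`, `{z,x} = y`, every
finite-dimensional Lie representation kills all brackets; i.e. there is no nontrivial
finite-dimensional Lie representation of the Poisson algebra of spherical harmonics. -/
theorem sphere_no_nontrivial_finite_dim_lie_rep
    (br : SphereRing →ₗ[ℝ] SphereRing →ₗ[ℝ] SphereRing)
    (anti : ∀ f g : SphereRing, br f g = - br g f)
    (jacobi : ∀ f g h : SphereRing, br f (br g h) = br (br f g) h + br g (br f h))
    (leibniz : ∀ f g h : SphereRing, br f (g * h) = br f g * h + g * br f h)
    (hxy : br sphereX sphereY = sphereZ)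
    (hyz : br sphereY sphereZ = sphereX)
    (hzx : br sphereZ sphereX = sphereY) :
    ∀ (V : Type) [AddCommGroup V] [Module ℝ V] [FiniteDimensional ℝ V]
      (ρ : SphereRing →ₗ[ℝ] Module.End ℝ V),
      (∀ f g : SphereRing, ρ (br f g) = ρ f * ρ g - ρ g * ρ f) →
      ∀ f g : SphereRing, ρ (br f g) = 0 :=
  sphere_no_nontrivial_finite_dim_lie_rep_general br anti leibniz hxy hyz hzx
end

section
/- Let g be a finite-dimensional real Lie algebra equipped with an invariant inner product, i.e. a positive-definite symmetric bilinear form B with B([x,y],z) + B(y,[x,z]) = 0 for all x,y,z ∈ g. Then for every h ∈ g, the Lie subalgebra of g generated by the subspace [g,h] = {[x,h] : x ∈ g} is an ideal of g. -/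
/-!
For an invariant anisotropic form, `B ⁅h, w⁆ ⁅h, w⁆ = -B w ⁅h, ⁅h, w⁆⁆`, so `range (ad h)` meets
`ker (ad h)` trivially and, by rank–nullity, `L = range (ad h) ⊕ ker (ad h)`. The range consists
of generators of the span, so brackets with it stay in the span. An element `c` commuting with
`h` maps each generator `⁅w, h⁆` to the generator `⁅⁅c, w⁆, h⁆`, and `ad c` is a derivation, so
it preserves the whole span.
-/

namespace LieAlgebra

open LieSubalgebra

section CommRing

variable {R L : Type*} [CommRing R] [LieRing L] [LieAlgebra R L]

lemma lie_mem_lieSpan_of_forall_lie_mem {s : Set L} {c : L}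
    (hs : ∀ v ∈ s, ⁅c, v⁆ ∈ lieSpan R L s) {z : L} (hz : z ∈ lieSpan R L s) :
    ⁅c, z⁆ ∈ lieSpan R L s := by
  induction hz using lieSpan_induction with
  | mem v hv => exact hs v hv
  | zero => simp
  | add a b _ _ ha hb => simpa only [lie_add] using add_mem ha hb
  | smul r a _ ha => simpa only [lie_smul] using (lieSpan R L s).smul_mem r ha
  | lie a b ha' hb' ha hb =>
    rw [leibniz_lie]
    exact add_mem (lie_mem _ ha hb') (lie_mem _ ha' hb)

lemma lie_mem_lieSpan_bracket_range_of_lie_eq_zero {h c : L} (hc : ⁅c, h⁆ = 0) {z : L}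
    (hz : z ∈ lieSpan R L {v : L | ∃ w : L, v = ⁅w, h⁆}) :
    ⁅c, z⁆ ∈ lieSpan R L {v : L | ∃ w : L, v = ⁅w, h⁆} := by
  refine lie_mem_lieSpan_of_forall_lie_mem ?_ hz
  rintro _ ⟨w, rfl⟩
  refine subset_lieSpan ⟨⁅c, w⁆, ?_⟩
  rw [leibniz_lie, hc, lie_zero, add_zero]

lemma disjoint_range_ker_ad (B : L →ₗ[R] L →ₗ[R] R) (hB : LinearMap.BilinForm.lieInvariant L B)
    (hanis : ∀ v, B v v = 0 → v = 0) (h : L) :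
    Disjoint (ad R L h).range (ad R L h).ker := by
  rw [Submodule.disjoint_def]
  rintro _ ⟨w, rfl⟩ hker
  apply hanis
  rw [LinearMap.mem_ker] at hker
  simp only [ad_apply] at hker ⊢
  rw [hB, hker, map_zero, neg_zero]

end CommRing

lemma isCompl_range_ker_ad {K L : Type*} [Field K] [LieRing L] [LieAlgebra K L]
    [FiniteDimensional K L] (B : L →ₗ[K] L →ₗ[K] K) (hB : LinearMap.BilinForm.lieInvariant L B)
    (hanis : ∀ v, B v v = 0 → v = 0) (h : L) :
    IsCompl (ad K L h).range (ad K L h).ker :=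
  (Submodule.isCompl_iff_disjoint _ _ (LinearMap.finrank_range_add_finrank_ker _).ge).mpr
    (disjoint_range_ker_ad B hB hanis h)

end LieAlgebra

open LieAlgebra LieSubalgebra in
theorem lieSpan_bracket_range_is_ideal_general
    {L : Type*} [LieRing L] [LieAlgebra ℝ L] [FiniteDimensional ℝ L]
    (B : L →ₗ[ℝ] L →ₗ[ℝ] ℝ)
    (hposdef : ∀ v : L, v ≠ 0 → 0 < B v v)
    (hinv : ∀ x y z : L, B ⁅x, y⁆ z + B y ⁅x, z⁆ = 0) :
    ∀ h : L, ∀ x y : L,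
      y ∈ LieSubalgebra.lieSpan ℝ L {v : L | ∃ w : L, v = ⁅w, h⁆} →
      ⁅x, y⁆ ∈ LieSubalgebra.lieSpan ℝ L {v : L | ∃ w : L, v = ⁅w, h⁆} := by
  intro h x y hy
  have hB : LinearMap.BilinForm.lieInvariant L B := fun x y z ↦
    eq_neg_of_add_eq_zero_left (hinv x y z)
  have hanis : ∀ v, B v v = 0 → v = 0 := fun v hv ↦
    by_contra fun hv0 ↦ (hposdef v hv0).ne' hv
  have hx : x ∈ (ad ℝ L h).range ⊔ (ad ℝ L h).ker := by
    rw [(isCompl_range_ker_ad B hB hanis h).sup_eq_top]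
    exact Submodule.mem_top
  obtain ⟨_, ⟨w, rfl⟩, c, hc, rfl⟩ := Submodule.mem_sup.mp hx
  have hch : ⁅c, h⁆ = 0 := by
    rw [← lie_skew, neg_eq_zero]
    exact LinearMap.mem_ker.mp hc
  rw [add_lie]
  refine add_mem (lie_mem _ (subset_lieSpan ⟨-w, ?_⟩) hy)
    (lie_mem_lieSpan_bracket_range_of_lie_eq_zero hch hy)
  rw [ad_apply, neg_lie, lie_skew]

/-- For a finite-dimensional real Lie algebra `g` with an invariant
inner product and any `h ∈ g`, the Lie subalgebra generated by the subspace
`[g,h] = {⁅x,h⁆ | x ∈ g}` is an ideal of `g`. -/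
theorem lieSpan_bracket_range_is_ideal
    {L : Type*} [LieRing L] [LieAlgebra ℝ L] [FiniteDimensional ℝ L]
    (B : L →ₗ[ℝ] L →ₗ[ℝ] ℝ)
    (hsymm : ∀ x y : L, B x y = B y x)
    (hposdef : ∀ v : L, v ≠ 0 → 0 < B v v)
    (hinv : ∀ x y z : L, B ⁅x, y⁆ z + B y ⁅x, z⁆ = 0) :
    ∀ h : L, ∀ x y : L,
      y ∈ LieSubalgebra.lieSpan ℝ L {v : L | ∃ w : L, v = ⁅w, h⁆} →
      ⁅x, y⁆ ∈ LieSubalgebra.lieSpan ℝ L {v : L | ∃ w : L, v = ⁅w, h⁆} :=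
  lieSpan_bracket_range_is_ideal_general B hposdef hinv
end

section
/- Let g be a finite-dimensional simple real Lie algebra equipped with an invariant inner product, i.e. a positive-definite symmetric bilinear form B with B([x,y],z) + B(y,[x,z]) = 0 for all x,y,z ∈ g (so g is compact simple). Then for every nonzero h ∈ g, the Lie subalgebra of g generated by the subspace [g,h] = {[x,h] : x ∈ g} is all of g. -/
/-! By invariance, `B ⁅h, x⁆ z = -B x ⁅h, z⁆`, so the orthogonal complement of `[h, g]` is the
centralizer of `h`, and positivity gives `g = [h, g] ⊕ z(h)`. The subalgebra `S` generated by
`[h, g]` is normalized by `[h, g] ⊆ S` and by `z(h)`, because `ad c` commutes with `ad h` for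
`c ∈ z(h)` and so preserves `[h, g]`. Hence `S` is an ideal, nonzero since a simple Lie algebra
has trivial centre, so `S = g`. -/

open LieAlgebra

namespace LinearMap.BilinForm

section Field

variable {K V : Type*} [Field K] [AddCommGroup V] [Module K V] [FiniteDimensional K V]

theorem isCompl_orthogonal_of_anisotropic {B : LinearMap.BilinForm K V}
    (hB : ∀ v, B v v = 0 → v = 0) (W : Submodule K V) : IsCompl W (B.orthogonal W) := by
  have hdisj : W ⊓ B.orthogonal W = ⊥ := eq_bot_iff.2 fun v hv => hB v (hv.2 v hv.1)
  refine IsCompl.of_eq hdisj <|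
    Submodule.eq_top_of_finrank_eq <| (Submodule.finrank_le _).antisymm ?_
  have hdim := finrank_add_finrank_orthogonal' (B := B) W
  have hsum := Submodule.finrank_sup_add_finrank_inf_eq W (B.orthogonal W)
  rw [hdisj, finrank_bot] at hsum
  lia

end Field

theorem orthogonal_range_ad_le_ker {R L : Type*} [CommRing R] [LieRing L] [LieAlgebra R L]
    {Φ : LinearMap.BilinForm R L} (hΦ : Φ.lieInvariant L) (hsep : Φ.SeparatingRight) (h : L) :
    Φ.orthogonal (range (ad R L h)) ≤ ker (ad R L h) := by
  intro z hz
  refine hsep _ fun x => ?_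
  have hx : Φ ⁅h, x⁆ z = 0 := hz _ ⟨x, rfl⟩
  rwa [hΦ, neg_eq_zero] at hx

end LinearMap.BilinForm

section

variable {R L : Type*} [CommRing R] [LieRing L] [LieAlgebra R L]

theorem LieAlgebra.coe_range_ad (h : L) :
    (LinearMap.range (ad R L h) : Set L) = {v : L | ∃ w : L, v = ⁅w, h⁆} := by
  ext v
  constructor
  · rintro ⟨w, rfl⟩
    exact ⟨-w, by rw [ad_apply, neg_lie, lie_skew]⟩
  · rintro ⟨w, rfl⟩
    exact ⟨-w, by rw [ad_apply, lie_neg, lie_skew]⟩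

namespace LieSubalgebra

theorem mem_normalizer_lieSpan_of_forall {s : Set L} {x : L}
    (hx : ∀ v ∈ s, ⁅x, v⁆ ∈ lieSpan R L s) : x ∈ (lieSpan R L s).normalizer := by
  rw [mem_normalizer_iff]
  intro y hy
  induction hy using lieSpan_induction with
  | mem v hv => exact hx v hv
  | zero => simp
  | add a b _ _ ha hb => rw [lie_add]; exact add_mem ha hb
  | smul t a _ ha => rw [lie_smul]; exact SMulMemClass.smul_mem t ha
  | lie a b ha' hb' ha hb =>
    rw [leibniz_lie]
    exact add_mem (lie_mem _ ha hb') (lie_mem _ ha' hb)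

theorem mem_normalizer_lieSpan_range_ad_of_lie_eq_zero {h c : L} (hc : ⁅h, c⁆ = 0) :
    c ∈ (lieSpan R L (LinearMap.range (ad R L h))).normalizer := by
  refine mem_normalizer_lieSpan_of_forall ?_
  rintro _ ⟨x, rfl⟩
  refine subset_lieSpan ⟨⁅c, x⁆, ?_⟩
  rw [ad_apply, ad_apply, leibniz_lie, hc, zero_lie, zero_add]

theorem normalizer_lieSpan_range_ad_eq_top {h : L}
    (hcod : Codisjoint (LinearMap.range (ad R L h)) (LinearMap.ker (ad R L h))) :
    (lieSpan R L (LinearMap.range (ad R L h))).normalizer = ⊤ := by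
  rw [← toSubmodule_inj, top_toSubmodule, eq_top_iff, ← hcod.eq_top]
  refine sup_le (fun v hv => le_normalizer _ (subset_lieSpan hv)) fun c hc => ?_
  exact mem_normalizer_lieSpan_range_ad_of_lie_eq_zero hc

theorem lieSpan_range_ad_ne_bot (hL : center R L = ⊥) {h : L} (hh : h ≠ 0) :
    lieSpan R L (LinearMap.range (ad R L h)) ≠ ⊥ := by
  intro hbot
  have hcen : h ∈ center R L := (LieModule.mem_maxTrivSubmodule R L L h).2 fun x => by
    have hx : ⁅h, x⁆ ∈ lieSpan R L (LinearMap.range (ad R L h)) := subset_lieSpan ⟨x, rfl⟩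
    rw [hbot, mem_bot] at hx
    rw [← lie_skew, hx, neg_zero]
  exact hh (by simpa [hL] using hcen)

end LieSubalgebra

end

open LinearMap LieSubalgebra

theorem lieSpan_bracket_range_eq_top_of_simple_general
    {L : Type*} [LieRing L] [LieAlgebra ℝ L] [FiniteDimensional ℝ L]
    [LieAlgebra.IsSimple ℝ L]
    (B : L →ₗ[ℝ] L →ₗ[ℝ] ℝ)
    (hposdef : ∀ v : L, v ≠ 0 → 0 < B v v)
    (hinv : ∀ x y z : L, B ⁅x, y⁆ z + B y ⁅x, z⁆ = 0) :
    ∀ h : L, h ≠ 0 →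
      LieSubalgebra.lieSpan ℝ L {v : L | ∃ w : L, v = ⁅w, h⁆} = ⊤ := by
  intro h hh
  have hB : ∀ v, B v v = 0 → v = 0 := fun v hv => by_contra fun hv0 => (hposdef v hv0).ne' hv
  have hBinv : BilinForm.lieInvariant L B := fun x y z => eq_neg_of_add_eq_zero_left (hinv x y z)
  have hcod : Codisjoint (range (ad ℝ L h)) (ker (ad ℝ L h)) :=
    (BilinForm.isCompl_orthogonal_of_anisotropic hB _).codisjoint.mono_right
      (BilinForm.orthogonal_range_ad_le_ker hBinv (fun v hv => hB v (hv v)) h)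
  have hideal : ∀ x y : L, y ∈ lieSpan ℝ L (range (ad ℝ L h)) →
      ⁅x, y⁆ ∈ lieSpan ℝ L (range (ad ℝ L h)) := fun x =>
    (mem_normalizer_iff _ x).1 (normalizer_lieSpan_range_ad_eq_top hcod ▸ mem_top x)
  obtain ⟨I, hI⟩ := (exists_lieIdeal_coe_eq_iff ℝ _).2 hideal
  rw [← coe_range_ad (R := ℝ), ← hI]
  rcases IsSimple.eq_bot_or_eq_top (R := ℝ) I with rfl | rfl
  · exact absurd hI.symm (lieSpan_range_ad_ne_bot (center_eq_bot ℝ L) hh)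
  · exact LieIdeal.top_toLieSubalgebra

/-- For a finite-dimensional simple real Lie algebra `g` with an
invariant inner product (i.e. a compact simple Lie algebra) and any nonzero `h ∈ g`,
the Lie subalgebra generated by the subspace `[g,h] = {⁅x,h⁆ | x ∈ g}` is all of `g`. -/
theorem lieSpan_bracket_range_eq_top_of_simple
    {L : Type*} [LieRing L] [LieAlgebra ℝ L] [FiniteDimensional ℝ L]
    [LieAlgebra.IsSimple ℝ L]
    (B : L →ₗ[ℝ] L →ₗ[ℝ] ℝ)
    (hsymm : ∀ x y : L, B x y = B y x)
    (hposdef : ∀ v : L, v ≠ 0 → 0 < B v v)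
    (hinv : ∀ x y z : L, B ⁅x, y⁆ z + B y ⁅x, z⁆ = 0) :
    ∀ h : L, h ≠ 0 →
      LieSubalgebra.lieSpan ℝ L {v : L | ∃ w : L, v = ⁅w, h⁆} = ⊤ :=
  lieSpan_bracket_range_eq_top_of_simple_general B hposdef hinv
end
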